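/- arXiv:1606.02097 — 4 statements merged into one kernel-verified Lean document; each statement's English description precedes it below -/
import Mathlib

section
/- Let G be a group acting faithfully, transitively and primitively on a finite set Ω, and suppose that for some ω ∈ Ω the point stabilizer G_ω has an orbit of length 2. Then |Ω| is an odd prime and G is isomorphic to the dihedral group of order 2|Ω|. -/
/-- A primitive permutation group: transitive and every point stabilizer is a
maximal subgroup (a coatom in the subgroup lattice). -/
def IsPrimitiveAction (G : Type*) (Ω : Type*) [Group G] [MulAction G Ω] : Prop :=
  MulAction.IsPretransitive G Ω ∧ ∀ ω : Ω, IsCoatom (MulAction.stabilizer G ω)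

/-!
Let `H = G_ω` and `A = G_α`. The `H`-orbit of `α` has length 2, and `H`, `A` have the same
index `|Ω|`, so `K = H ∩ A` has index 2 in both and is normalized by both. As `H` is maximal and
`A ≰ H`, `K` is normal in `G`; a normal subgroup inside a point stabilizer of a faithful
transitive action is trivial, so `|H| = 2`.

Write `H = {1, σ}`. Since `H` is not normal, a conjugate `τ` of `σ` lies outside `H`, and
maximality gives `G = ⟨σ, τ⟩`, so `ρ = στ` is inverted by `σ` and every subgroup of `⟨ρ⟩` is
normal. In a primitive group a nontrivial normal subgroup is transitive, hence has order at least
`|Ω|`; on the other hand `⟨ρ⟩ ∩ H = 1` gives `|⟨ρ⟩| ≤ |Ω|`. So `ρ` has order `|Ω|`, and so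
does every nontrivial power of `ρ`, which makes `|Ω|` prime; `|G| = 2|Ω|` then identifies `G`
with the dihedral group. Finally `|Ω| ≠ 2`, since groups of order 4 are abelian.
-/

open MulAction Subgroup

section GroupTheory

variable {G : Type*} [Group G]

theorem Subgroup.exists_mem_iff_eq_one_or_eq_of_card_eq_two {H : Subgroup G}
    (h : Nat.card H = 2) : ∃ σ : G, σ ≠ 1 ∧ σ * σ = 1 ∧ ∀ x, x ∈ H ↔ x = 1 ∨ x = σ := by
  obtain ⟨σ, hσ1, hσ⟩ := (Nat.card_eq_two_iff' (1 : H)).mp h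
  have hmem : ∀ x, x ∈ H ↔ x = 1 ∨ x = σ := fun x ↦ by
    refine ⟨fun hx ↦ ?_, by rintro (rfl | rfl) <;> simp⟩
    by_cases hx1 : (⟨x, hx⟩ : H) = 1
    · exact .inl (congrArg Subtype.val hx1)
    · exact .inr (congrArg Subtype.val (hσ _ hx1))
  refine ⟨σ, fun h ↦ hσ1 (Subtype.ext h), ?_, hmem⟩
  rcases (hmem _).mp (H.mul_mem σ.2 σ.2) with h | h
  · exact h
  · exact absurd (Subtype.ext (mul_eq_right.mp h)) hσ1

theorem zpowers_pow_normal {σ ρ : G} (hρ : σ * ρ * σ⁻¹ = ρ⁻¹) (hgen : closure {σ, ρ} = ⊤)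
    (k : ℕ) : (zpowers (ρ ^ k)).Normal := by
  rw [← normalizer_eq_top_iff, eq_top_iff, ← hgen, closure_le]
  rintro g (rfl | rfl) <;>
    rw [SetLike.mem_coe, mem_normalizer_iff_map_conj_eq, MonoidHom.map_zpowers]
  · rw [MonoidHom.coe_coe, map_pow, MulAut.conj_apply, hρ, inv_pow, zpowers_inv]
  · rw [MonoidHom.coe_coe, MulAut.conj_apply, (Commute.self_pow g k).eq, mul_inv_cancel_right]

theorem prime_orderOf_of_le_orderOf_pow {x : G} (h0 : orderOf x ≠ 0) (h1 : orderOf x ≠ 1)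
    (h : ∀ k : ℕ, x ^ k ≠ 1 → orderOf x ≤ orderOf (x ^ k)) : (orderOf x).Prime := by
  have hp : (orderOf x).minFac.Prime := Nat.minFac_prime h1
  have hord : orderOf (x ^ (orderOf x / (orderOf x).minFac)) = (orderOf x).minFac :=
    orderOf_pow_orderOf_div h0 (Nat.minFac_dvd _)
  have hle := h _ fun h' ↦ hp.one_lt.ne' (by rw [← hord, h', orderOf_one])
  rw [hord] at hle
  rwa [le_antisymm hle (Nat.minFac_le (Nat.pos_of_ne_zero h0))]

theorem nonempty_mulEquiv_dihedralGroup [Finite G] {σ ρ : G} (hσ : σ * σ = 1)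
    (hρ : σ * ρ * σ⁻¹ = ρ⁻¹) (hgen : closure {σ, ρ} = ⊤)
    (hcard : Nat.card G = 2 * orderOf ρ) : Nonempty (G ≃* DihedralGroup (orderOf ρ)) := by
  have : NeZero (orderOf ρ) := ⟨(isOfFinOrder_of_finite ρ).orderOf_pos.ne'⟩
  let P (i : ZMod (orderOf ρ)) : G := ρ ^ i.val
  have hP_add (i j : ZMod (orderOf ρ)) : P (i + j) = P i * P j := by
    simp only [P, ZMod.val_add, pow_mod_orderOf, pow_add]
  have hP_neg (i : ZMod (orderOf ρ)) : P (-i) = (P i)⁻¹ :=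
    eq_inv_of_mul_eq_one_left (by rw [← hP_add, neg_add_cancel]; simp [P])
  have hP_one : P 1 = ρ := by simp only [P, ZMod.val_one_eq_one_mod, pow_mod_orderOf, pow_one]
  have hσP (i : ZMod (orderOf ρ)) : P i * σ = σ * P (-i) := by
    have hconj : σ * P (-i) * σ⁻¹ = P i := by
      rw [← MulAut.conj_apply, map_pow, MulAut.conj_apply, hρ, inv_pow, ← hP_neg, neg_neg]
    rw [← hconj, inv_mul_cancel_right]
  let f : DihedralGroup (orderOf ρ) →* G :=
    { toFun := fun
        | .r i => P i
        | .sr i => σ * P i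
      map_one' := show P 0 = 1 by simp [P]
      map_mul' := by
        rintro (i | i) (j | j)
        · exact hP_add i j
        · show σ * P (j - i) = P i * (σ * P j)
          rw [← mul_assoc, hσP, mul_assoc, ← hP_add, neg_add_eq_sub]
        · show σ * P (i + j) = σ * P i * P j
          rw [hP_add, mul_assoc]
        · show P (j - i) = σ * P i * (σ * P j)
          rw [mul_assoc σ, ← mul_assoc (P i), hσP, ← mul_assoc, ← mul_assoc, hσ, one_mul,
            ← hP_add, neg_add_eq_sub] }
  have hsurj : Function.Surjective f := by
    rw [← MonoidHom.range_eq_top, eq_top_iff, ← hgen, closure_le, Set.insert_subset_iff,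
      Set.singleton_subset_iff]
    exact ⟨⟨.sr 0, show σ * P 0 = σ by simp [P]⟩, ⟨.r 1, hP_one⟩⟩
  have hbij : Function.Bijective f := (Nat.bijective_iff_surjective_and_card f).mpr
    ⟨hsurj, by rw [DihedralGroup.nat_card, hcard]⟩
  exact ⟨(MulEquiv.ofBijective f hbij).symm⟩

end GroupTheory

section PermutationGroup

variable {G Ω : Type*} [Group G] [MulAction G Ω]

theorem IsPrimitiveAction.isPreprimitive [Nontrivial Ω] (h : IsPrimitiveAction G Ω) :
    IsPreprimitive G Ω := by
  have := h.1
  obtain ⟨ω⟩ := ‹Nontrivial Ω›.to_nonempty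
  exact (isCoatom_stabilizer_iff_preprimitive G ω).mp (h.2 ω)

theorem eq_bot_of_normal_of_le_stabilizer [FaithfulSMul G Ω] [IsPretransitive G Ω]
    {N : Subgroup G} [N.Normal] {ω : Ω} (hN : N ≤ stabilizer G ω) : N = ⊥ := by
  refine (eq_bot_iff_forall N).mpr fun x hx ↦ eq_of_smul_eq_smul (α := Ω) fun y ↦ ?_
  obtain ⟨g, rfl⟩ := exists_smul_eq G ω y
  have hfix : (g⁻¹ * x * g) • ω = ω := hN (by simpa using ‹N.Normal›.conj_mem x hx g⁻¹)
  calc x • g • ω = g • (g⁻¹ * x * g) • ω := by simp [smul_smul, mul_assoc]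
    _ = (1 : G) • g • ω := by rw [hfix, one_smul]

theorem not_isMulCommutative_of_stabilizer_ne_bot [FaithfulSMul G Ω] [IsPretransitive G Ω]
    {ω : Ω} (h : stabilizer G ω ≠ ⊥) : ¬ IsMulCommutative G :=
  fun _ ↦ h (eq_bot_of_normal_of_le_stabilizer le_rfl)

theorem card_le_card_of_normal [FaithfulSMul G Ω] [IsPreprimitive G Ω] [Finite G]
    {N : Subgroup G} [N.Normal] (hN : N ≠ ⊥) : Nat.card Ω ≤ Nat.card N := by
  obtain ⟨x, hx1⟩ := ne_bot_iff_exists_ne_one.mp hN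
  obtain ⟨ω, hω⟩ : ∃ ω : Ω, x • ω ≠ ω := by
    by_contra! h
    exact hx1 (Subtype.ext (eq_of_smul_eq_smul (α := Ω) fun a ↦ (h a).trans (one_smul G a).symm))
  have : IsPretransitive N Ω := IsQuasiPreprimitive.isPretransitive_of_normal <|
    Set.ne_univ_iff_exists_notMem _ |>.mpr ⟨ω, fun h ↦ hω (h x)⟩
  exact Nat.card_le_card_of_surjective (fun n : N ↦ n • ω) (exists_smul_eq N ω)

theorem card_le_card_of_inf_stabilizer_eq_bot [Finite Ω] {N : Subgroup G} {ω : Ω}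
    (hN : N ⊓ stabilizer G ω = ⊥) : Nat.card N ≤ Nat.card Ω := by
  refine Nat.card_le_card_of_injective (fun n : N ↦ (n : G) • ω) fun m n hmn ↦ ?_
  have hmem : (n : G)⁻¹ * m ∈ N ⊓ stabilizer G ω :=
    ⟨N.mul_mem (N.inv_mem n.2) m.2, by simp [mem_stabilizer_iff, mul_smul, hmn]⟩
  rw [hN, mem_bot, inv_mul_eq_one] at hmem
  exact Subtype.ext hmem.symm

theorem relIndex_stabilizer_eq_ncard_orbit (ω α : Ω) :
    (stabilizer G α).relIndex (stabilizer G ω) = (orbit (stabilizer G ω) α).ncard := by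
  rw [← index_stabilizer]
  rfl

theorem relIndex_stabilizer_comm [IsPretransitive G Ω] [Finite Ω] (ω α : Ω) :
    (stabilizer G α).relIndex (stabilizer G ω) = (stabilizer G ω).relIndex (stabilizer G α) := by
  have : Nonempty Ω := ⟨ω⟩
  have hω := relIndex_mul_index (inf_le_left : stabilizer G ω ⊓ stabilizer G α ≤ _)
  have hα := relIndex_mul_index (inf_le_right : stabilizer G ω ⊓ stabilizer G α ≤ _)
  rw [inf_relIndex_left, index_stabilizer_of_transitive] at hω
  rw [inf_relIndex_right, index_stabilizer_of_transitive, ← hω] at hα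
  exact (Nat.eq_of_mul_eq_mul_right Nat.card_pos hα).symm

theorem card_stabilizer_eq_two [FaithfulSMul G Ω] [IsPretransitive G Ω] [Finite Ω] {ω α : Ω}
    (hω : IsCoatom (stabilizer G ω)) (horb : (orbit (stabilizer G ω) α).ncard = 2) :
    Nat.card (stabilizer G ω) = 2 := by
  set H := stabilizer G ω
  set A := stabilizer G α
  have hAH : A.relIndex H = 2 := (relIndex_stabilizer_eq_ncard_orbit ω α).trans horb
  have hHA : H.relIndex A = 2 := relIndex_stabilizer_comm (G := G) ω α ▸ hAH
  have hH : H ≤ normalizer ((H ⊓ A : Subgroup G) : Set G) := by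
    rw [inf_comm]
    exact normal_subgroupOf_iff_le_normalizer_inf.mp (normal_of_index_eq_two hAH)
  have hA : A ≤ normalizer ((H ⊓ A : Subgroup G) : Set G) :=
    normal_subgroupOf_iff_le_normalizer_inf.mp (normal_of_index_eq_two hHA)
  rcases hω.le_iff.mp hH with hK | hK
  · have : (H ⊓ A).Normal := normalizer_eq_top_iff.mp hK
    rw [← inf_relIndex_left, eq_bot_of_normal_of_le_stabilizer inf_le_left,
      relIndex_bot_left] at hAH
    exact hAH
  · have h := relIndex_mul_index (hK ▸ hA)
    rw [hAH, index_stabilizer_of_transitive, index_stabilizer_of_transitive] at h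
    have : Nonempty Ω := ⟨ω⟩
    have : 0 < Nat.card Ω := Nat.card_pos
    omega

theorem exists_conj_eq_inv_and_closure_eq_top [FaithfulSMul G Ω] [IsPretransitive G Ω] {ω : Ω}
    {σ : G} (hω : IsCoatom (stabilizer G ω)) (hσ1 : σ ≠ 1) (hσ : σ * σ = 1)
    (hH : ∀ x, x ∈ stabilizer G ω ↔ x = 1 ∨ x = σ) :
    ∃ ρ, σ * ρ * σ⁻¹ = ρ⁻¹ ∧ closure {σ, ρ} = ⊤ := by
  have hnormal : ¬ (stabilizer G ω).Normal := fun _ ↦ hσ1 <| by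
    simpa [eq_bot_of_normal_of_le_stabilizer le_rfl] using (hH σ).mpr (.inr rfl)
  obtain ⟨t, ht⟩ : ∃ t, t * σ * t⁻¹ ∉ stabilizer G ω := by
    by_contra! h
    refine hnormal ⟨fun x hx g ↦ ?_⟩
    rcases (hH x).mp hx with rfl | rfl
    · simp
    · exact h g
  set τ := t * σ * t⁻¹
  have hτ : τ * τ = 1 := by simp [τ, mul_assoc, ← mul_assoc σ σ, hσ]
  clear_value τ
  have hσ' : σ⁻¹ = σ := inv_eq_of_mul_eq_one_right hσ
  refine ⟨σ * τ, ?_, hω.2 _ (lt_of_le_of_ne (fun x hx ↦ ?_) fun h ↦ ht ?_)⟩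
  · rw [hσ', mul_inv_rev, hσ', inv_eq_of_mul_eq_one_right hτ, ← mul_assoc, hσ, one_mul]
  · rcases (hH x).mp hx with rfl | rfl
    · exact one_mem _
    · exact subset_closure (by simp)
  · have hmem := mul_mem (subset_closure (Set.mem_insert σ {σ * τ}))
      (subset_closure (Set.mem_insert_of_mem σ (Set.mem_singleton (σ * τ))))
    rwa [← mul_assoc, hσ, one_mul, ← h] at hmem

theorem orderOf_eq_card_of_conj_eq_inv [FaithfulSMul G Ω] [IsPreprimitive G Ω] [Finite G]
    [Finite Ω] {ω : Ω} {σ ρ : G} (hσ1 : σ ≠ 1) (hH : ∀ x, x ∈ stabilizer G ω ↔ x = 1 ∨ x = σ)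
    (hρ : σ * ρ * σ⁻¹ = ρ⁻¹) (hgen : closure {σ, ρ} = ⊤) : orderOf ρ = Nat.card Ω := by
  have hstab : stabilizer G ω ≠ ⊥ := fun h ↦ hσ1 (by simpa [h] using (hH σ).mpr (.inr rfl))
  have hσR : σ ∉ zpowers ρ := fun hσR ↦ by
    have : IsCyclic G := isCyclic_iff_exists_zpowers_eq_top.mpr ⟨ρ, eq_top_iff.mpr <| hgen ▸
      (closure_le _).mpr (Set.insert_subset hσR (Set.singleton_subset_iff.mpr (mem_zpowers ρ)))⟩
    exact not_isMulCommutative_of_stabilizer_ne_bot hstab inferInstance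
  have hR : zpowers ρ ≠ ⊥ := fun h ↦ by
    have hle : (⊤ : Subgroup G) ≤ stabilizer G ω := by
      rw [← hgen, closure_le, Set.insert_subset_iff, Set.singleton_subset_iff,
        zpowers_eq_bot.mp h]
      exact ⟨(hH σ).mpr (.inr rfl), one_mem _⟩
    exact hstab (eq_top_iff.mpr hle ▸ eq_bot_of_normal_of_le_stabilizer hle)
  have : (zpowers ρ).Normal := by simpa using zpowers_pow_normal hρ hgen 1
  rw [← Nat.card_zpowers]
  refine le_antisymm (card_le_card_of_inf_stabilizer_eq_bot (ω := ω) (eq_bot_iff.mpr ?_))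
    (card_le_card_of_normal hR)
  rintro x ⟨hxR, hxH⟩
  rcases (hH x).mp hxH with rfl | rfl
  · exact one_mem _
  · exact absurd hxR hσR

end PermutationGroup

theorem stmt_1 (G : Type*) (Ω : Type*) [Group G] [MulAction G Ω] [Finite Ω]
    [FaithfulSMul G Ω]
    (hprim : IsPrimitiveAction G Ω)
    (ω : Ω) (α : Ω)
    (horb : (MulAction.orbit (MulAction.stabilizer G ω) α).ncard = 2) :
    Odd (Nat.card Ω) ∧ (Nat.card Ω).Prime ∧
      Nonempty (G ≃* DihedralGroup (Nat.card Ω)) := by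
  have : Finite G := Finite.of_injective _ (toPerm_injective (α := G) (β := Ω))
  have : Nontrivial Ω := Finite.one_lt_card_iff_nontrivial.mp <|
    (horb ▸ Set.ncard_le_card (orbit (stabilizer G ω) α) : 2 ≤ Nat.card Ω)
  have := hprim.isPreprimitive
  have h2 := card_stabilizer_eq_two (hprim.2 ω) horb
  obtain ⟨σ, hσ1, hσ, hH⟩ := exists_mem_iff_eq_one_or_eq_of_card_eq_two h2
  have hstab : stabilizer G ω ≠ ⊥ := fun h ↦ by simp [h] at h2
  obtain ⟨ρ, hρ, hgen⟩ := exists_conj_eq_inv_and_closure_eq_top (hprim.2 ω) hσ1 hσ hH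
  have hord := orderOf_eq_card_of_conj_eq_inv hσ1 hH hρ hgen
  have hcard : Nat.card G = 2 * Nat.card Ω := by
    rw [← index_mul_card (stabilizer G ω), index_stabilizer_of_transitive, h2, mul_comm]
  have hprime : (Nat.card Ω).Prime := hord ▸ prime_orderOf_of_le_orderOf_pow
    (hord ▸ Nat.card_pos.ne') (hord ▸ Finite.one_lt_card.ne') fun k hk ↦ by
      have := zpowers_pow_normal hρ hgen k
      rw [hord, ← Nat.card_zpowers]
      exact card_le_card_of_normal (zpowers_eq_bot.not.mpr hk)
  have hne_two : Nat.card Ω ≠ 2 := fun h ↦ not_isMulCommutative_of_stabilizer_ne_bot hstab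
    (IsPGroup.isMulCommutative_of_card_eq_prime_sq (p := 2) (by rw [hcard, h]; rfl))
  exact ⟨hprime.odd_of_ne_two hne_two, hprime,
    hord ▸ nonempty_mulEquiv_dihedralGroup hσ hρ hgen (hord ▸ hcard)⟩
end

section
/- Let G, Ω, v, d, H and N be as in the standing hypotheses. Then there is a bijection between the set of binary relations A ⊆ Ω × Ω for which (Ω, A) is a G-arc-transitive digraph of out-valency d, and the set of cosets (N/H) \ {H}, i.e. the nonidentity elements of the group N/H. -/
/-!
A `G`-arc-transitive digraph is an orbital `G • (v, w)`, determined by the `G_v`-orbit of `w`,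
and its out-valency is `|G_v : G_{v,w}|`. As the subgroups of index `d` of `G_v` form one
conjugacy class of self-normalising subgroups, each such orbital contains exactly one arc `(v, w)`
with `G_{v,w} = H`. These `w` are exactly the points `n • v ≠ v` with `n ∈ N`: one inclusion is a
Frattini argument, the other uses that `H` is maximal in `G_v` and that in a primitive non-regular
group `G_v` fixes no point but `v`. Finally `N ∩ G_v = H`, so `n • v ↦ nH` identifies these points
with the non-identity elements of `N/H`.
-/

/-- The digraph with arc-set `A` is `G`-arc-transitive: the action of `G` preserves `A`
and is transitive on `A`. -/
def IsGArcTransitiveDigraph (G : Type*) {Ω : Type*} [Group G] [MulAction G Ω]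
    (A : Set (Ω × Ω)) : Prop :=
  (∀ (g : G), ∀ p ∈ A, (g • (Prod.fst p), g • (Prod.snd p)) ∈ A) ∧
    (∀ p ∈ A, ∀ q ∈ A, ∃ g : G, g • (Prod.fst p) = Prod.fst q ∧ g • (Prod.snd p) = Prod.snd q)

/-- The digraph with arc-set `A` has out-valency `d`: every vertex has exactly `d`
out-neighbours. -/
def HasOutValency {Ω : Type*} (A : Set (Ω × Ω)) (d : ℕ) : Prop :=
  ∀ x : Ω, {y : Ω | (x, y) ∈ A}.ncard = d

open MulAction Subgroup Pointwise

theorem Subgroup.map_conj_eq_of_map_conj_subgroupOf_eq {G : Type*} [Group G]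
    {K L S : Subgroup G} (hK : K ≤ S) (hL : L ≤ S) {s : S}
    (h : (K.subgroupOf S).map (MulAut.conj s).toMonoidHom = L.subgroupOf S) :
    K.map (MulAut.conj (s : G)).toMonoidHom = L := by
  have hKs : K.map (MulAut.conj (s : G)).toMonoidHom ≤ S := by
    rintro - ⟨k, hk, rfl⟩
    exact mul_mem (mul_mem s.2 (hK hk)) (inv_mem s.2)
  have hS : (K.map (MulAut.conj (s : G)).toMonoidHom).subgroupOf S = L.subgroupOf S := by
    rw [← h]
    ext x
    simp only [mem_subgroupOf, mem_map]
    constructor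
    · rintro ⟨k, hk, hkx⟩
      exact ⟨⟨k, hK hk⟩, hk, Subtype.ext hkx⟩
    · rintro ⟨k, hk, rfl⟩
      exact ⟨k, hk, rfl⟩
  simpa only [subgroupOf_inj, inf_of_le_left hKs, inf_of_le_left hL] using hS

theorem Subgroup.relIndex_map_conj {G : Type*} [Group G] {H S : Subgroup G} (g : G)
    (hS : S.index ≠ 0) (hH : H ≤ S) (hHg : H.map (MulAut.conj g).toMonoidHom ≤ S) :
    (H.map (MulAut.conj g).toMonoidHom).relIndex S = H.relIndex S := by
  refine Nat.eq_of_mul_eq_mul_right (Nat.pos_of_ne_zero hS) ?_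
  rw [relIndex_mul_index hH, relIndex_mul_index hHg]
  exact index_map_equiv H (MulAut.conj g)

theorem MulAction.eq_of_mem_orbit_of_stabilizer_eq {S X : Type*} [Group S] [MulAction S X]
    {K : Subgroup S} (hK : normalizer (K : Set S) = K) {x y : X} (hx : stabilizer S x = K)
    (hy : stabilizer S y = K) (hxy : y ∈ orbit S x) : y = x := by
  obtain ⟨s, rfl⟩ := hxy
  have hs : s ∈ normalizer (K : Set S) := by
    rw [mem_normalizer_iff_map_conj_eq, ← hx]
    exact (stabilizer_smul_eq_stabilizer_map_conj s x).symm.trans (hy.trans hx.symm)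
  rw [hK, ← hx] at hs
  exact hs

noncomputable def MulAction.quotientNeOneEquiv {N Ω : Type*} [Group N] [MulAction N Ω] {v : Ω}
    {L : Subgroup N} [L.Normal] (hL : stabilizer N v = L) :
    {x : N ⧸ L // x ≠ 1} ≃ {w : Ω // w ∈ orbit N v ∧ w ≠ v} :=
  let e := ((orbitEquivQuotientStabilizer N v).trans (quotientEquivOfEq hL)).symm
  have he : e 1 = ⟨v, mem_orbit_self v⟩ := Subtype.ext (one_smul N v)
  (e.subtypeEquiv fun _ => (e.injective.ne_iff' he).symm).trans <|
    (Equiv.subtypeEquivRight fun w =>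
      (Subtype.ext_iff (a1 := w) (a2 := ⟨v, mem_orbit_self v⟩)).not).trans <|
    Equiv.subtypeSubtypeEquivSubtypeInter (· ∈ orbit N v) (· ≠ v)

section

variable {G Ω : Type*} [Group G] [MulAction G Ω]

theorem MulAction.stabilizer_eq_bot_of_normal [IsPretransitive G Ω] [FaithfulSMul G Ω] (v : Ω)
    [(stabilizer G v).Normal] : stabilizer G v = ⊥ := by
  refine (eq_bot_iff_forall _).mpr fun s hs => eq_of_smul_eq_smul fun x : Ω => ?_
  obtain ⟨g, rfl⟩ := exists_smul_eq G v x
  have hconj : g⁻¹ * s * g ∈ stabilizer G v := by simpa using Normal.conj_mem' ‹_› s hs g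
  rw [one_smul, ← inv_smul_eq_iff, smul_smul, smul_smul]
  exact hconj

theorem MulAction.stabilizer_ne_bot_of_exists [IsPretransitive G Ω] (v : Ω)
    (h : ∃ ω : Ω, stabilizer G ω ≠ ⊥) : stabilizer G v ≠ ⊥ := by
  obtain ⟨ω, hω⟩ := h
  obtain ⟨g, rfl⟩ := exists_smul_eq G v ω
  rw [stabilizer_smul_eq_stabilizer_map_conj] at hω
  exact fun h => hω (by rw [h, Subgroup.map_bot])

theorem MulAction.eq_of_stabilizer_le [IsPretransitive G Ω] [FaithfulSMul G Ω] {v w : Ω}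
    (hmax : IsCoatom (stabilizer G v)) (hnt : stabilizer G v ≠ ⊥)
    (h : stabilizer G v ≤ stabilizer G w) : w = v := by
  obtain ⟨g, rfl⟩ := exists_smul_eq G v w
  have hw : stabilizer G (g • v) = stabilizer G v := by
    refine (hmax.le_iff.mp h).resolve_left fun htop => hmax.1 ?_
    have hv : g⁻¹ • g • v = g • v := by
      rw [← mem_stabilizer_iff, htop]; exact mem_top _
    rw [inv_smul_smul] at hv
    rwa [← hv] at htop
  have hnorm : normalizer (stabilizer G v : Set G) = stabilizer G v := by
    refine (hmax.le_iff.mp le_normalizer).resolve_left fun htop => hnt ?_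
    have : (stabilizer G v).Normal := normalizer_eq_top_iff.mp htop
    exact stabilizer_eq_bot_of_normal v
  have hg : g ∈ normalizer (stabilizer G v : Set G) := by
    rw [mem_normalizer_iff_map_conj_eq]
    exact (stabilizer_smul_eq_stabilizer_map_conj g v).symm.trans hw
  rw [hnorm] at hg
  exact hg

theorem isGArcTransitiveDigraph_orbit (p : Ω × Ω) : IsGArcTransitiveDigraph G (orbit G p) := by
  refine ⟨fun g q hq => mem_orbit_of_mem_orbit g hq, ?_⟩
  rintro - ⟨a, rfl⟩ - ⟨b, rfl⟩
  exact ⟨b * a⁻¹, by simp [mul_smul]⟩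

theorem IsGArcTransitiveDigraph.eq_orbit {A : Set (Ω × Ω)} (hA : IsGArcTransitiveDigraph G A)
    {p : Ω × Ω} (hp : p ∈ A) : A = orbit G p := by
  ext q
  constructor
  · intro hq
    obtain ⟨g, h1, h2⟩ := hA.2 p hp q hq
    exact ⟨g, Prod.ext h1 h2⟩
  · rintro ⟨g, rfl⟩
    exact hA.1 g p hp

theorem setOf_mem_orbit_prod (v w : Ω) :
    {y | (v, y) ∈ orbit G (v, w)} = orbit (stabilizer G v) w := by
  ext y
  simp only [Set.mem_ofPred_eq, mem_orbit_iff, Prod.smul_mk, Prod.mk.injEq, Subtype.exists,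
    mem_stabilizer_iff, Subgroup.mk_smul]
  exact ⟨fun ⟨g, h1, h2⟩ => ⟨g, h1, h2⟩, fun ⟨g, h1, h2⟩ => ⟨g, h1, h2⟩⟩

theorem setOf_smul_mem_orbit (g : G) (v : Ω) (p : Ω × Ω) :
    {y | (g • v, y) ∈ orbit G p} = g • {y | (v, y) ∈ orbit G p} := by
  ext y
  rw [Set.mem_smul_set_iff_inv_smul_mem, Set.mem_ofPred_eq, Set.mem_ofPred_eq,
    ← orbit_eq_iff, ← orbit_eq_iff, ← orbit_smul g⁻¹ (g • v, y), Prod.smul_mk, inv_smul_smul]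

theorem hasOutValency_orbit_iff [IsPretransitive G Ω] (v w : Ω) (d : ℕ) :
    HasOutValency (orbit G (v, w)) d ↔ (stabilizer (stabilizer G v) w).index = d := by
  rw [index_stabilizer, ← setOf_mem_orbit_prod]
  refine ⟨fun h => h v, fun h x => ?_⟩
  obtain ⟨g, rfl⟩ := exists_smul_eq G v x
  rw [setOf_smul_mem_orbit, Set.ncard_smul_set, h]

section Orbital

variable {v : Ω} {K : Subgroup (stabilizer G v)} {d : ℕ}

theorem eq_of_orbit_mk_eq_orbit_mk (hK : normalizer (K : Set (stabilizer G v)) = K) {w w' : Ω}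
    (hw : stabilizer (stabilizer G v) w = K) (hw' : stabilizer (stabilizer G v) w' = K)
    (h : orbit G (v, w) = orbit G (v, w')) : w = w' := by
  refine eq_of_mem_orbit_of_stabilizer_eq hK hw' hw ?_
  rw [← setOf_mem_orbit_prod, ← h]
  exact mem_orbit_self _

theorem IsGArcTransitiveDigraph.exists_stabilizer_eq_and_eq_orbit [IsPretransitive G Ω]
    (hd : d ≠ 0)
    (hconj : ∀ L : Subgroup (stabilizer G v), L.index = d →
      ∃ s, L.map (MulAut.conj s).toMonoidHom = K)
    {A : Set (Ω × Ω)} (hA : IsGArcTransitiveDigraph G A) (hAd : HasOutValency A d) :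
    ∃ w, stabilizer (stabilizer G v) w = K ∧ orbit G (v, w) = A := by
  obtain ⟨u, hu⟩ := Set.nonempty_of_ncard_ne_zero ((hAd v).trans_ne hd)
  have hAu := hA.eq_orbit hu
  rw [hAu, hasOutValency_orbit_iff] at hAd
  obtain ⟨s, hs⟩ := hconj _ hAd
  refine ⟨s • u, by rw [stabilizer_smul_eq_stabilizer_map_conj, hs], ?_⟩
  rw [hAu, ← orbit_smul (s : G) (v, u), Prod.smul_mk, mem_stabilizer_iff.mp s.2]
  rfl

noncomputable def equivArcTransitiveDigraph [IsPretransitive G Ω] (hd : d ≠ 0)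
    (hKd : K.index = d) (hK : normalizer (K : Set (stabilizer G v)) = K)
    (hconj : ∀ L : Subgroup (stabilizer G v), L.index = d →
      ∃ s, L.map (MulAut.conj s).toMonoidHom = K) :
    {w : Ω // stabilizer (stabilizer G v) w = K} ≃
      {A : Set (Ω × Ω) // IsGArcTransitiveDigraph G A ∧ HasOutValency A d} :=
  Equiv.ofBijective
    (fun w => ⟨orbit G (v, w.1), isGArcTransitiveDigraph_orbit _,
      (hasOutValency_orbit_iff v w.1 d).mpr (w.2.symm ▸ hKd)⟩)
    ⟨fun w w' h => Subtype.ext (eq_of_orbit_mk_eq_orbit_mk hK w.2 w'.2 (congrArg Subtype.val h)),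
      fun A => (A.2.1.exists_stabilizer_eq_and_eq_orbit hd hconj A.2.2).elim
        fun w hw => ⟨⟨w, hw.1⟩, Subtype.ext hw.2⟩⟩

end Orbital

section Normalizer

variable {v : Ω} {H : Subgroup G}

theorem stabilizer_normalizer_eq_subgroupOf (hHle : H ≤ stabilizer G v)
    (hself : normalizer (H.subgroupOf (stabilizer G v) : Set (stabilizer G v)) =
      H.subgroupOf (stabilizer G v)) :
    stabilizer (normalizer (H : Set G)) v = H.subgroupOf (normalizer (H : Set G)) := by
  ext ⟨x, hx⟩
  rw [mem_subgroupOf]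
  refine ⟨fun hxv => ?_, fun hxH => hHle hxH⟩
  have : (⟨x, hxv⟩ : stabilizer G v) ∈ (normalizer (H : Set G)).subgroupOf (stabilizer G v) := hx
  rwa [subgroupOf_normalizer_eq hHle, hself, mem_subgroupOf] at this

theorem le_stabilizer_smul_of_mem_normalizer (hHle : H ≤ stabilizer G v) {n : G}
    (hn : n ∈ normalizer (H : Set G)) : H ≤ stabilizer G (n • v) := by
  rw [stabilizer_smul_eq_stabilizer_map_conj]
  exact (mem_normalizer_iff_map_conj_eq.mp hn).symm.le.trans (map_mono hHle)

theorem stabilizer_eq_subgroupOf_of_mem_orbit_normalizer [IsPretransitive G Ω]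
    [FaithfulSMul G Ω] (hHle : H ≤ stabilizer G v) (hprim : IsCoatom (stabilizer G v))
    (hnt : stabilizer G v ≠ ⊥) (hmax : IsCoatom (H.subgroupOf (stabilizer G v))) {w : Ω}
    (hw : w ∈ orbit (normalizer (H : Set G)) v) (hwv : w ≠ v) :
    stabilizer (stabilizer G v) w = H.subgroupOf (stabilizer G v) := by
  obtain ⟨⟨n, hn⟩, rfl⟩ := hw
  have hle : H.subgroupOf (stabilizer G v) ≤ stabilizer (stabilizer G v) (n • v) :=
    fun x hx => le_stabilizer_smul_of_mem_normalizer hHle hn hx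
  refine (hmax.le_iff.mp hle).resolve_left fun htop =>
    hwv (eq_of_stabilizer_le hprim hnt fun x hx => ?_)
  have hx' : (⟨x, hx⟩ : stabilizer G v) ∈ stabilizer (stabilizer G v) (n • v) := htop ▸ mem_top _
  exact hx'

theorem mem_orbit_normalizer_of_stabilizer_eq_subgroupOf [IsPretransitive G Ω] [Finite Ω]
    (hHle : H ≤ stabilizer G v) {d : ℕ} (hHidx : (H.subgroupOf (stabilizer G v)).index = d)
    (hconj : ∀ L : Subgroup (stabilizer G v), L.index = d →
      ∃ s, L.map (MulAut.conj s).toMonoidHom = H.subgroupOf (stabilizer G v)) {w : Ω}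
    (hw : stabilizer (stabilizer G v) w = H.subgroupOf (stabilizer G v)) :
    w ∈ orbit (normalizer (H : Set G)) v := by
  obtain ⟨g, rfl⟩ := exists_smul_eq G v w
  have hHw : H ≤ stabilizer G (g • v) := fun h hh =>
    (hw ▸ hh : (⟨h, hHle hh⟩ : stabilizer G v) ∈ stabilizer (stabilizer G v) (g • v))
  set K := H.map (MulAut.conj g⁻¹).toMonoidHom
  have hKv : K ≤ stabilizer G v := by
    have hv := stabilizer_smul_eq_stabilizer_map_conj g⁻¹ (g • v)
    rw [inv_smul_smul] at hv
    exact hv ▸ map_mono hHw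
  have hKd : (K.subgroupOf (stabilizer G v)).index = d := by
    rw [← relIndex, relIndex_map_conj _ ?_ hHle hKv]
    · exact hHidx
    · rw [index_stabilizer_of_transitive]; exact Nat.card_ne_zero.mpr ⟨⟨v⟩, ‹_›⟩
  obtain ⟨s, hs⟩ := hconj _ hKd
  have hsg : (s : G) * g⁻¹ ∈ normalizer (H : Set G) := by
    have hs' := map_conj_eq_of_map_conj_subgroupOf_eq hKv hHle hs
    rw [map_map] at hs'
    rw [mem_normalizer_iff_map_conj_eq]
    convert hs' using 2
    ext x
    simp [mul_assoc]
  refine ⟨⟨g * (s : G)⁻¹, by simpa using inv_mem hsg⟩, ?_⟩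
  show (g * (s : G)⁻¹) • v = g • v
  rw [mul_smul, inv_smul_eq_iff.mpr (mem_stabilizer_iff.mp s.2).symm]

theorem stabilizer_eq_subgroupOf_iff_mem_orbit_normalizer [IsPretransitive G Ω]
    [FaithfulSMul G Ω] [Finite Ω] (hHle : H ≤ stabilizer G v)
    (hprim : IsCoatom (stabilizer G v)) (hnt : stabilizer G v ≠ ⊥)
    (hmax : IsCoatom (H.subgroupOf (stabilizer G v)))
    {d : ℕ} (hHidx : (H.subgroupOf (stabilizer G v)).index = d)
    (hconj : ∀ L : Subgroup (stabilizer G v), L.index = d →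
      ∃ s, L.map (MulAut.conj s).toMonoidHom = H.subgroupOf (stabilizer G v)) (w : Ω) :
    stabilizer (stabilizer G v) w = H.subgroupOf (stabilizer G v) ↔
      w ∈ orbit (normalizer (H : Set G)) v ∧ w ≠ v := by
  refine ⟨fun hw => ⟨mem_orbit_normalizer_of_stabilizer_eq_subgroupOf hHle hHidx hconj hw, ?_⟩,
    fun hw => stabilizer_eq_subgroupOf_of_mem_orbit_normalizer hHle hprim hnt hmax hw.1 hw.2⟩
  rintro rfl
  exact hmax.1 (hw.symm.trans (eq_top_iff.mpr fun s _ => s.2))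

end Normalizer

end

theorem stmt_2 (G Ω : Type*) [Group G] [MulAction G Ω] [Finite Ω] [FaithfulSMul G Ω]
    -- G acts primitively (transitively with maximal point stabilizers) ...
    (htrans : MulAction.IsPretransitive G Ω)
    (hprim : ∀ ω : Ω, IsCoatom (MulAction.stabilizer G ω))
    -- ... and non-regularly
    (hnonreg : ∃ ω : Ω, MulAction.stabilizer G ω ≠ ⊥)
    (v : Ω) (d : ℕ) (hd : 2 ≤ d)
    -- G_v has a unique conjugacy class of subgroups of index d ...
    (hconj : ∀ K L : Subgroup (MulAction.stabilizer G v), K.index = d → L.index = d →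
      ∃ g : (MulAction.stabilizer G v), Subgroup.map (MulAut.conj g).toMonoidHom K = L)
    -- ... and these subgroups are maximal and self-normalising in G_v
    (hmax : ∀ K : Subgroup (MulAction.stabilizer G v), K.index = d → IsCoatom K)
    (hself : ∀ K : Subgroup (MulAction.stabilizer G v), K.index = d → Subgroup.normalizer (K : Set (MulAction.stabilizer G v)) = K)
    -- H is such a subgroup of index d in G_v
    (H : Subgroup G) (hHle : H ≤ MulAction.stabilizer G v)
    (hHidx : (H.subgroupOf (MulAction.stabilizer G v)).index = d) :
    -- bijection between G-arc-transitive digraphs of out-valency d and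
    -- non-identity elements of N/H, where N = N_G(H)
    Nonempty
      ({A : Set (Ω × Ω) // IsGArcTransitiveDigraph G A ∧ HasOutValency A d} ≃
        {x : Subgroup.normalizer (H : Set G) ⧸ H.subgroupOf (Subgroup.normalizer (H : Set G)) // x ≠ 1}) := by
  have hnt := stabilizer_ne_bot_of_exists v hnonreg
  have hconjH : ∀ L : Subgroup (stabilizer G v), L.index = d →
      ∃ s, L.map (MulAut.conj s).toMonoidHom = H.subgroupOf (stabilizer G v) :=
    fun L hL => hconj L _ hL hHidx
  exact ⟨(equivArcTransitiveDigraph (by omega) hHidx (hself _ hHidx) hconjH).symm.trans <|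
    (Equiv.subtypeEquivRight fun w => stabilizer_eq_subgroupOf_iff_mem_orbit_normalizer hHle
      (hprim v) hnt (hmax _ hHidx) hHidx hconjH w).trans
    (quotientNeOneEquiv (stabilizer_normalizer_eq_subgroupOf hHle (hself _ hHidx))).symm⟩
end

section
/- Let q be an odd prime power and let X be a subgroup of PGL(2,q) isomorphic to the symmetric group Sym(4). Then X is self-normalising in PGL(2,q) (i.e. N_{PGL(2,q)}(X) = X), and if Y is a subgroup of X of index 2 (so Y ≅ Alt(4)), then the normaliser of Y in PGL(2,q) equals X. -/
/-!
Let `V ≤ X` be the Klein four-group. In odd characteristic, lifts to `GL(2, q)` of two distinct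
commuting involutions of `PGL(2, q)` anticommute. Hence `V` is self-centralising: a lift `P` of an
element centralising `V` commutes or anticommutes with each lift of `V`; multiplying `P` by the
lift of the element of `V` with the same signs gives a matrix commuting with two anticommuting
invertible matrices, i.e. a scalar.

If `g` normalises `Y ≅ Alt(4)`, it permutes the involutions of `Y`, which are those of `V`. Since
`Sym(4)` induces every permutation of them, `g` acts on `V` like some `x ∈ X`, and then
`x⁻¹ g ∈ C(V) = V ≤ X`. Finally `N(X)` normalises the image of `Alt(4)`, which is the set of
squares of `X`, so `N(X) ≤ X` as well.
-/

/-- The projective general linear group PGL(2,F): the quotient of GL(2,F) by its center. -/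
abbrev PGL2 (F : Type*) [Field F] :=
  Matrix.GeneralLinearGroup (Fin 2) F ⧸ Subgroup.center (Matrix.GeneralLinearGroup (Fin 2) F)

open Equiv Subgroup

namespace Perm4

def τ₁ : Perm (Fin 4) := swap 0 1 * swap 2 3
def τ₂ : Perm (Fin 4) := swap 0 2 * swap 1 3

def kleinInvolutions : Finset (Perm (Fin 4)) := {τ₁, τ₂, τ₁ * τ₂}

lemma mem_kleinInvolutions_iff (z : Perm (Fin 4)) :
    z ∈ kleinInvolutions ↔ z ∈ alternatingGroup (Fin 4) ∧ z * z = 1 ∧ z ≠ 1 := by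
  rw [Perm.mem_alternatingGroup]; revert z; decide

lemma exists_conj_eq_of_mem_kleinInvolutions :
    ∀ u ∈ kleinInvolutions, ∀ v ∈ kleinInvolutions, u ≠ v →
      ∃ σ : Perm (Fin 4), σ * τ₁ * σ⁻¹ = u ∧ σ * τ₂ * σ⁻¹ = v := by
  decide

lemma exists_mul_self_eq_of_mem_alternatingGroup {z : Perm (Fin 4)}
    (hz : z ∈ alternatingGroup (Fin 4)) : ∃ w : Perm (Fin 4), w * w = z := by
  rw [Perm.mem_alternatingGroup] at hz; revert z; decide

lemma τ₁_mem_kleinInvolutions : τ₁ ∈ kleinInvolutions := by simp [kleinInvolutions]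
lemma τ₂_mem_kleinInvolutions : τ₂ ∈ kleinInvolutions := by simp [kleinInvolutions]
lemma commute_τ₁_τ₂ : Commute τ₁ τ₂ := by unfold Commute SemiconjBy; decide
lemma τ₁_ne_τ₂ : τ₁ ≠ τ₂ := by decide

end Perm4

section

variable {F : Type*} [Field F]

local notation "M₂" => Matrix (Fin 2) (Fin 2) F

lemma exists_proportional_of_minors_eq_zero {a₁ a₂ a₃ p₁ p₂ p₃ : F}
    (ha : a₁ ≠ 0 ∨ a₂ ≠ 0 ∨ a₃ ≠ 0)
    (h₁₂ : p₁ * a₂ = a₁ * p₂) (h₁₃ : p₁ * a₃ = a₁ * p₃) (h₂₃ : p₂ * a₃ = a₂ * p₃) :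
    ∃ y, p₁ = y * a₁ ∧ p₂ = y * a₂ ∧ p₃ = y * a₃ := by
  rcases ha with h | h | h
  · refine ⟨p₁ / a₁, ?_, ?_, ?_⟩ <;> field_simp
    · linear_combination -h₁₂
    · linear_combination -h₁₃
  · refine ⟨p₂ / a₂, ?_, ?_, ?_⟩ <;> field_simp
    · linear_combination h₁₂
    · linear_combination -h₂₃
  · refine ⟨p₃ / a₃, ?_, ?_, ?_⟩ <;> field_simp
    · linear_combination h₁₃
    · linear_combination h₂₃

lemma Matrix.exists_eq_smul_one_add_smul_of_commute {A P : M₂}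
    (hA : ∀ c : F, A ≠ c • 1) (h : Commute P A) : ∃ x y : F, P = x • 1 + y • A := by
  have e₀₀ := congr_fun₂ h.eq 0 0
  have e₀₁ := congr_fun₂ h.eq 0 1
  have e₁₀ := congr_fun₂ h.eq 1 0
  simp only [Matrix.mul_apply, Fin.sum_univ_two] at e₀₀ e₀₁ e₁₀
  have hA₀ : A 0 1 ≠ 0 ∨ A 1 0 ≠ 0 ∨ A 0 0 - A 1 1 ≠ 0 := by
    by_contra! h0
    apply hA (A 0 0)
    ext i j
    fin_cases i <;> fin_cases j <;> simp [h0.1, h0.2.1, sub_eq_zero.1 h0.2.2]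
  obtain ⟨y, h₀₁, h₁₀, hd⟩ := exists_proportional_of_minors_eq_zero (p₁ := P 0 1) (p₂ := P 1 0)
    (p₃ := P 0 0 - P 1 1) hA₀ (by linear_combination e₀₀) (by linear_combination -e₀₁)
    (by linear_combination e₁₀)
  refine ⟨P 0 0 - y * A 0 0, y, ?_⟩
  ext i j
  fin_cases i <;> fin_cases j <;> simp [h₀₁, h₁₀]
  linear_combination -hd

lemma commute_mul_of_anticommute {R : Type*} [Ring R] {a b c : R} (hb : a * b = -(b * a))
    (hc : a * c = -(c * a)) : Commute a (b * c) := by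
  rw [Commute, SemiconjBy, ← mul_assoc, hb, neg_mul, mul_assoc, hc, mul_neg, neg_neg, mul_assoc]

lemma Matrix.exists_eq_smul_one_of_commute_of_anticommute (h2 : (2 : F) ≠ 0)
    {M N P : M₂} (hMN : M * N ≠ 0) (hanti : N * M = -(M * N))
    (hPM : Commute P M) (hPN : Commute P N) : ∃ c : F, P = c • 1 := by
  have hM : ∀ c : F, M ≠ c • 1 := by
    rintro c rfl
    have : (2 * c) • N = 0 := by
      simp only [smul_mul_assoc, mul_smul_comm, one_mul, mul_one] at hanti
      linear_combination (norm := module) hanti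
    simp_all
  obtain ⟨x, y, rfl⟩ := exists_eq_smul_one_add_smul_of_commute hM hPM
  have : (2 * y) • (M * N) = 0 := by
    have := hPN.eq
    simp only [add_mul, mul_add, smul_mul_assoc, mul_smul_comm, one_mul, mul_one, hanti] at this
    linear_combination (norm := module) this
  refine ⟨x, ?_⟩
  simp_all

namespace PGL2

open Perm4

lemma mk_eq_one_iff {u : GL (Fin 2) F} :
    (u : PGL2 F) = 1 ↔ ∃ c : F, (u : M₂) = c • 1 := by
  rw [QuotientGroup.eq_one_iff, Matrix.GeneralLinearGroup.mem_center_iff_val_mem_range_scalar]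
  simp [Matrix.smul_one_eq_diagonal, eq_comm]

lemma commute_or_anticommute_of_commute {u v : GL (Fin 2) F}
    (h : Commute (u : PGL2 F) (v : PGL2 F)) :
    Commute (u : M₂) v ∨ (u * v : M₂) = -(v * u) := by
  obtain ⟨c, hc⟩ : ∃ c : F, (((v * u)⁻¹ * (u * v) : GL (Fin 2) F) : M₂) = c • 1 := by
    rw [← mk_eq_one_iff]
    simp [h.eq]
  have huv : (u * v : M₂) = c • (v * u) := by
    rw [← Units.val_mul, ← mul_inv_cancel_left (v * u) (u * v), Units.val_mul, hc]
    simp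
  have hc2 : c * c = 1 := by
    have := congr_arg Matrix.det huv
    simp only [Matrix.det_smul, Matrix.det_mul, Fintype.card_fin] at this
    have hdet : (v : M₂).det * (u : M₂).det ≠ 0 :=
      mul_ne_zero v.det_ne_zero u.det_ne_zero
    rw [← sq]
    exact mul_right_cancel₀ hdet (by linear_combination -this)
  rcases mul_self_eq_one_iff.1 hc2 with rfl | rfl
  · left; simpa [Commute, SemiconjBy] using huv
  · right; simpa using huv

lemma anticommute_of_commute (h2 : (2 : F) ≠ 0) {u v : GL (Fin 2) F}
    (hu2 : (u : PGL2 F) * u = 1) (hv2 : (v : PGL2 F) * v = 1) (hu1 : (u : PGL2 F) ≠ 1)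
    (hv1 : (v : PGL2 F) ≠ 1) (huv : (u : PGL2 F) ≠ v) (h : Commute (u : PGL2 F) v) :
    (u * v : M₂) = -(v * u) := by
  refine (commute_or_anticommute_of_commute h).resolve_left fun hc => ?_
  have hsq : ∀ w : GL (Fin 2) F, (w : PGL2 F) * w = 1 → ∃ α : F, (w * w : M₂) = α • 1 :=
    fun w hw => by rw [← Units.val_mul, ← mk_eq_one_iff, QuotientGroup.mk_mul, hw]
  obtain ⟨α, hα⟩ := hsq u hu2
  obtain ⟨β, hβ⟩ := hsq v hv2
  have hu : ∀ c : F, (u : M₂) ≠ c • 1 := fun c hc => hu1 (mk_eq_one_iff.2 ⟨c, hc⟩)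
  obtain ⟨x, y, hxy⟩ := Matrix.exists_eq_smul_one_add_smul_of_commute hu hc.symm
  have hxy0 : (2 * (x * y)) • (u : M₂) = (β - x * x - y * y * α) • 1 := by
    rw [hxy] at hβ
    simp only [add_mul, mul_add, smul_mul_assoc, mul_smul_comm, one_mul, mul_one, hα,
      smul_smul] at hβ
    linear_combination (norm := module) hβ
  have : x * y = 0 := by
    by_contra hne
    refine hu ((2 * (x * y))⁻¹ * (β - x * x - y * y * α)) ?_
    rw [mul_smul, eq_inv_smul_iff₀ (mul_ne_zero h2 hne), hxy0]
  rcases mul_eq_zero.1 this with rfl | rfl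
  · have hvu : (v : PGL2 F) * u = 1 := by
      rw [← QuotientGroup.mk_mul, mk_eq_one_iff]
      refine ⟨y * α, ?_⟩
      rw [Units.val_mul, hxy, zero_smul, zero_add, smul_mul_assoc, hα, smul_smul]
    exact huv (mul_right_cancel (hu2.trans hvu.symm))
  · exact hv1 (mk_eq_one_iff.2 ⟨x, by rw [hxy, zero_smul, add_zero]⟩)

lemma eq_one_or_eq_of_commute_of_commute (h2 : (2 : F) ≠ 0) {a b g : PGL2 F} (ha : a * a = 1)
    (hb : b * b = 1) (ha1 : a ≠ 1) (hb1 : b ≠ 1) (hab : a ≠ b) (hcomm : Commute a b)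
    (hga : Commute g a) (hgb : Commute g b) : g = 1 ∨ g = a ∨ g = b ∨ g = a * b := by
  have eq_of_mul_involution_eq_one : ∀ r, r * r = 1 → g * r = 1 → g = r := fun r hr h => by
    rw [eq_inv_of_mul_eq_one_left h, inv_eq_of_mul_eq_one_right hr]
  obtain ⟨A, rfl⟩ := QuotientGroup.mk_surjective a
  obtain ⟨B, rfl⟩ := QuotientGroup.mk_surjective b
  obtain ⟨G, rfl⟩ := QuotientGroup.mk_surjective g
  have hanti : (B * A : M₂) = -(A * B) :=
    neg_eq_iff_eq_neg.1 (anticommute_of_commute h2 ha hb ha1 hb1 hab hcomm).symm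
  have hAB : (A * B : M₂) ≠ 0 := by rw [← Units.val_mul]; exact Units.ne_zero _
  have key : ∀ R : GL (Fin 2) F, Commute (A : M₂) (G * R) → Commute (B : M₂) (G * R) →
      (G : PGL2 F) * R = 1 := fun R hA hB => by
    rw [← QuotientGroup.mk_mul, mk_eq_one_iff, Units.val_mul]
    exact Matrix.exists_eq_smul_one_of_commute_of_anticommute h2 hAB hanti hA.symm hB.symm
  rcases commute_or_anticommute_of_commute hga.symm with hGA | hGA <;>
    rcases commute_or_anticommute_of_commute hgb.symm with hGB | hGB
  · left
    simpa using key 1 (by simpa using hGA) (by simpa using hGB)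
  · right; left
    exact eq_of_mul_involution_eq_one _ ha <| key A (hGA.mul_right (Commute.refl _))
      (commute_mul_of_anticommute hGB hanti)
  · right; right; left
    exact eq_of_mul_involution_eq_one _ hb <| key B
      (commute_mul_of_anticommute hGA (neg_eq_iff_eq_neg.1 hanti.symm))
      (hGB.mul_right (Commute.refl _))
  · right; right; right
    refine eq_of_mul_involution_eq_one _ (by rw [← sq, hcomm.mul_pow, sq, sq, ha, hb, one_mul]) ?_
    rw [← QuotientGroup.mk_mul]
    refine key (A * B) ?_ ?_ <;> rw [Units.val_mul]
    · exact commute_mul_of_anticommute hGA (by rw [mul_assoc, hanti, mul_neg, neg_neg])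
    · exact commute_mul_of_anticommute hGB (by rw [← mul_assoc, hanti, neg_mul])

lemma centralizer_le_range (h2 : (2 : F) ≠ 0)
    {f : Perm (Fin 4) →* PGL2 F} (hf : Function.Injective f) :
    centralizer {f τ₁, f τ₂} ≤ f.range := fun g hg => by
  have h₁ : Commute g (f τ₁) := (mem_centralizer_iff.1 hg _ (by simp)).symm
  have h₂ : Commute g (f τ₂) := (mem_centralizer_iff.1 hg _ (by simp)).symm
  obtain ⟨-, hτ₁, hτ₁1⟩ := (mem_kleinInvolutions_iff τ₁).1 τ₁_mem_kleinInvolutions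
  obtain ⟨-, hτ₂, hτ₂1⟩ := (mem_kleinInvolutions_iff τ₂).1 τ₂_mem_kleinInvolutions
  rcases eq_one_or_eq_of_commute_of_commute h2 (by rw [← map_mul, hτ₁, map_one])
    (by rw [← map_mul, hτ₂, map_one]) ((map_ne_one_iff f hf).2 hτ₁1)
    ((map_ne_one_iff f hf).2 hτ₂1) (hf.ne τ₁_ne_τ₂) (commute_τ₁_τ₂.map f) h₁ h₂
    with rfl | rfl | rfl | rfl
  · exact one_mem _
  · exact ⟨τ₁, rfl⟩
  · exact ⟨τ₂, rfl⟩
  · exact ⟨τ₁ * τ₂, map_mul f _ _⟩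

end PGL2

end

section KleinFour

open Perm4

variable {G : Type*} [Group G] {f : Perm (Fin 4) →* G}

lemma commute_inv_mul_of_conj_eq {x y a : G} (h : x * a * x⁻¹ = y * a * y⁻¹) :
    Commute (x⁻¹ * y) a :=
  calc x⁻¹ * y * a = x⁻¹ * (y * a * y⁻¹) * y := by group
    _ = x⁻¹ * (x * a * x⁻¹) * y := by rw [h]
    _ = a * (x⁻¹ * y) := by group

lemma exists_conj_eq_of_mem_normalizer (hf : Function.Injective f) {Y : Subgroup G}
    (hYf : Y ≤ f.range) (hY : Y.comap f = alternatingGroup (Fin 4)) {g : G}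
    (hg : g ∈ normalizer (Y : Set G)) {u : Perm (Fin 4)} (hu : u ∈ kleinInvolutions) :
    ∃ u' ∈ kleinInvolutions, g * f u * g⁻¹ = f u' := by
  obtain ⟨huA, hu2, hu1⟩ := (mem_kleinInvolutions_iff u).1 hu
  have hconj : g * f u * g⁻¹ ∈ Y := by
    refine (mem_normalizer_iff.1 hg _).1 ?_
    rw [← mem_comap, hY]
    exact huA
  obtain ⟨u', hu'⟩ := hYf hconj
  refine ⟨u', (mem_kleinInvolutions_iff u').2 ⟨?_, hf ?_, ?_⟩, hu'.symm⟩
  · rw [← hY, mem_comap, hu']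
    exact hconj
  · calc f (u' * u') = g * f (u * u) * g⁻¹ := by rw [map_mul, map_mul, hu']; group
      _ = f 1 := by rw [hu2, map_one, mul_one, mul_inv_cancel]
  · rintro rfl
    rw [map_one, eq_comm, conj_eq_one_iff, ← map_one f] at hu'
    exact hu1 (hf hu')

lemma mem_range_of_conj_eq (hf : Function.Injective f)
    (hC : centralizer {f τ₁, f τ₂} ≤ f.range) {g : G} {u v : Perm (Fin 4)}
    (hu : u ∈ kleinInvolutions) (hv : v ∈ kleinInvolutions) (h₁ : g * f τ₁ * g⁻¹ = f u)
    (h₂ : g * f τ₂ * g⁻¹ = f v) :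
    g ∈ f.range := by
  have huv : u ≠ v := by
    rintro rfl
    exact τ₁_ne_τ₂ (hf (mul_left_cancel (mul_right_cancel (h₁.trans h₂.symm))))
  obtain ⟨σ, hσ₁, hσ₂⟩ := exists_conj_eq_of_mem_kleinInvolutions u hu v hv huv
  have hσg : (f σ)⁻¹ * g ∈ f.range := by
    refine hC (mem_centralizer_iff.2 ?_)
    rintro _ (rfl | rfl) <;> refine (commute_inv_mul_of_conj_eq ?_).symm.eq
    · rw [h₁, ← hσ₁, map_mul, map_mul, map_inv]
    · rw [h₂, ← hσ₂, map_mul, map_mul, map_inv]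
  simpa using mul_mem (⟨σ, rfl⟩ : f σ ∈ f.range) hσg

lemma normalizer_le_range (hf : Function.Injective f)
    (hC : centralizer {f τ₁, f τ₂} ≤ f.range) {Y : Subgroup G}
    (hYf : Y ≤ f.range) (hY : Y.comap f = alternatingGroup (Fin 4)) :
    normalizer (Y : Set G) ≤ f.range := fun g hg => by
  obtain ⟨u, hu, h₁⟩ :=
    exists_conj_eq_of_mem_normalizer hf hYf hY hg τ₁_mem_kleinInvolutions
  obtain ⟨v, hv, h₂⟩ :=
    exists_conj_eq_of_mem_normalizer hf hYf hY hg τ₂_mem_kleinInvolutions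
  exact mem_range_of_conj_eq hf hC hu hv h₁ h₂

lemma normalizer_eq_range (hf : Function.Injective f)
    (hC : centralizer {f τ₁, f τ₂} ≤ f.range) {Y : Subgroup G}
    (hYf : Y ≤ f.range) (hY : Y.relIndex f.range = 2) : normalizer (Y : Set G) = f.range := by
  have : (Y.subgroupOf f.range).Normal := normal_of_index_eq_two hY
  refine le_antisymm (normalizer_le_range hf hC hYf ?_) (le_normalizer_of_normal_subgroupOf hYf)
  exact Perm.eq_alternatingGroup_of_index_eq_two (by rw [index_comap, hY])

lemma normalizer_range_le_normalizer_map_alternatingGroup :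
    normalizer (f.range : Set G) ≤ normalizer ((alternatingGroup (Fin 4)).map f : Set G) := by
  have conj_mem : ∀ g ∈ normalizer (f.range : Set G), ∀ y ∈ (alternatingGroup (Fin 4)).map f,
      g * y * g⁻¹ ∈ (alternatingGroup (Fin 4)).map f := by
    rintro g hg _ ⟨z, hz, rfl⟩
    obtain ⟨w, rfl⟩ := exists_mul_self_eq_of_mem_alternatingGroup hz
    obtain ⟨w', hw'⟩ := (mem_normalizer_iff.1 hg (f w)).1 ⟨w, rfl⟩
    refine ⟨w' * w', ?_, ?_⟩
    · simp
    · rw [map_mul, hw', map_mul]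
      group
  refine fun g hg => mem_normalizer_iff.2 fun y => ⟨conj_mem g hg y, fun h => ?_⟩
  simpa [mul_assoc] using conj_mem g⁻¹ (inv_mem hg) _ h

lemma normalizer_range_eq (hf : Function.Injective f)
    (hC : centralizer {f τ₁, f τ₂} ≤ f.range) :
    normalizer (f.range : Set G) = f.range := by
  refine le_antisymm (normalizer_range_le_normalizer_map_alternatingGroup.trans ?_) le_normalizer
  refine (normalizer_eq_range hf hC (map_le_range _ _) ?_).le
  rw [← index_comap, comap_map_eq_self_of_injective hf, alternatingGroup.index_eq_two]

end KleinFour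

theorem stmt_9 (F : Type*) [Field F] [Fintype F] (hodd : Odd (Fintype.card F))
    (X : Subgroup (PGL2 F)) (hX : Nonempty (X ≃* Equiv.Perm (Fin 4))) :
    Subgroup.normalizer (X : Set (PGL2 F)) = X ∧
      ∀ Y : Subgroup (PGL2 F), Y ≤ X → Y.relIndex X = 2 → Subgroup.normalizer (Y : Set (PGL2 F)) = X := by
  obtain ⟨e⟩ := hX
  obtain ⟨f, hf, rfl⟩ : ∃ f : Perm (Fin 4) →* PGL2 F, Function.Injective f ∧ f.range = X :=
    ⟨X.subtype.comp e.symm.toMonoidHom, X.subtype_injective.comp e.symm.injective,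
      by rw [MonoidHom.range_comp, MonoidHom.range_eq_top_of_surjective _ e.symm.surjective,
        ← MonoidHom.range_eq_map, range_subtype]⟩
  have h2 : (2 : F) ≠ 0 := Ring.two_ne_zero fun h => by
    have := FiniteField.even_card_iff_char_two.1 h
    rw [Nat.odd_iff] at hodd
    omega
  have hC := PGL2.centralizer_le_range h2 hf
  exact ⟨normalizer_range_eq hf hC, fun Y hYf hY => normalizer_eq_range hf hC hYf hY⟩
end

section
/- Every vertex-primitive finite simple graph of valency 5 is arc-transitive: if Γ is a finite simple graph in which every vertex has exactly 5 neighbours and the full automorphism group Aut(Γ) acts primitively on the vertex set, then Aut(Γ) acts transitively on the arcs of Γ (the ordered pairs of adjacent vertices). -/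
variable {V : Type*} (Γ : SimpleGraph V)

/-- The automorphism group of a graph acts on the vertices. -/
instance : MulAction (Γ ≃g Γ) V where
  smul f v := f v
  one_smul _ := rfl
  mul_smul _ _ _ := rfl

/-- `Γ` is vertex-primitive: its automorphism group acts transitively on the vertices
and every vertex stabilizer is a maximal subgroup. -/
def VertexPrimitive : Prop :=
  MulAction.IsPretransitive (Γ ≃g Γ) V ∧
    ∀ v : V, IsCoatom (MulAction.stabilizer (Γ ≃g Γ) v)

/-- The automorphism group of `Γ` acts transitively on arcs (ordered pairs of
adjacent vertices). -/
def ArcTransitive : Prop :=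
  ∀ u v x y : V, Γ.Adj u v → Γ.Adj x y → ∃ f : Γ ≃g Γ, f u = x ∧ f v = y

/-! Let `G = Aut Γ` and `G_v` the stabilizer of a vertex `v`. A regular primitive group has
prime order, while the number of vertices is even (the valency is odd) and larger than two, so
`G_v ≠ 1`; maximality of `G_v` then forces distinct vertices to have distinct stabilizers, so
`G_v` fixes no neighbour of `v`. If `G_v` were intransitive on the five neighbours, it would
have an orbit `{w, w'}` of length two. Then `G_v ⊓ G_w` has index two in both `G_v` and `G_w`,
so it is normalized by `G_v ⊔ G_w = G` and hence trivial. Thus `|G_v| = 2`, and an involution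
permuting the five neighbours of `v` fixes one of them, a contradiction. -/

namespace Subgroup

variable {G : Type*} [Group G]

theorem card_inf_mul_relIndex (H K : Subgroup G) :
    Nat.card (H ⊓ K : Subgroup G) * K.relIndex H = Nat.card H := by
  simpa [relIndex_bot_left, inf_comm] using relIndex_inf_mul_relIndex ⊥ K H

theorem relIndex_comm_of_card_eq [Finite G] {H K : Subgroup G}
    (hcard : Nat.card H = Nat.card K) : K.relIndex H = H.relIndex K := by
  have h := (card_inf_mul_relIndex H K).trans (hcard.trans (card_inf_mul_relIndex K H).symm)
  rw [inf_comm] at h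
  exact Nat.eq_of_mul_eq_mul_left Nat.card_pos h

theorem normal_inf_of_isCoatom_of_relIndex_eq_two [Finite G] {H K : Subgroup G}
    (hH : IsCoatom H) (hKH : ¬K ≤ H) (hcard : Nat.card H = Nat.card K)
    (h2 : K.relIndex H = 2) : (H ⊓ K).Normal := by
  have : (K.subgroupOf H).Normal := normal_of_index_eq_two h2
  have : (H.subgroupOf K).Normal :=
    normal_of_index_eq_two ((relIndex_comm_of_card_eq hcard).symm.trans h2)
  have hH_le : H ≤ normalizer (H ⊓ K : Subgroup G) := by
    rw [inf_comm]; exact normal_subgroupOf_iff_le_normalizer_inf.mp ‹_›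
  have hK_le : K ≤ normalizer (H ⊓ K : Subgroup G) :=
    normal_subgroupOf_iff_le_normalizer_inf.mp ‹_›
  have hsup : H ⊔ K = ⊤ := hH.2 _ (left_lt_sup.mpr hKH)
  rw [← normalizer_eq_top_iff, eq_top_iff, ← hsup]
  exact sup_le hH_le hK_le

end Subgroup

namespace MulAction

variable {G X : Type*} [Group G] [MulAction G X]

theorem card_stabilizer_eq [IsPretransitive G X] (x y : X) :
    Nat.card (stabilizer G x) = Nat.card (stabilizer G y) := by
  obtain ⟨g, rfl⟩ := exists_smul_eq G x y
  rw [stabilizer_smul_eq_stabilizer_map_conj]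
  exact (Subgroup.card_map_of_injective (MulAut.conj g).injective).symm

theorem eq_bot_of_normal_of_le_stabilizer [IsPretransitive G X] [FaithfulSMul G X]
    {N : Subgroup G} [N.Normal] {x : X} (hN : N ≤ stabilizer G x) : N = ⊥ := by
  refine (Subgroup.eq_bot_iff_forall N).mpr fun n hn => eq_of_smul_eq_smul (α := X) fun y => ?_
  obtain ⟨g, rfl⟩ := exists_smul_eq G x y
  have : g⁻¹ * n * g ∈ stabilizer G x := hN (by simpa using ‹N.Normal›.conj_mem n hn g⁻¹)
  rw [one_smul, ← smul_left_cancel_iff g⁻¹, ← mul_smul, ← mul_smul, inv_smul_smul]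
  exact this

theorem stabilizer_ne_bot_of_isCoatom [Finite G] [IsPretransitive G X] {x : X}
    (hx : IsCoatom (stabilizer G x)) (heven : Even (Nat.card X)) (hcard : 2 < Nat.card X) :
    stabilizer G x ≠ ⊥ := by
  intro hbot
  have hGX : Nat.card G = Nat.card X := by
    rw [← index_stabilizer_of_transitive G x, hbot, Subgroup.index_bot]
  obtain ⟨g, hg⟩ := exists_prime_orderOf_dvd_card' 2 (hGX ▸ heven.two_dvd)
  have hg1 : g ≠ 1 := by rintro rfl; simp at hg
  have htop : Subgroup.zpowers g = ⊤ :=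
    (hbot ▸ hx).2 _ (bot_lt_iff_ne_bot.mpr (Subgroup.zpowers_ne_bot.mpr hg1))
  have : Nat.card G = 2 := by
    rw [← Subgroup.card_top, ← htop, Nat.card_zpowers, hg]
  omega

/-- The element moving `x` to `y` normalizes the maximal subgroup `stabilizer G x`, which is
not normal since the action is faithful and not regular. -/
theorem eq_of_stabilizer_le_s17 [Finite G] [IsPretransitive G X] [FaithfulSMul G X] {x y : X}
    (hx : IsCoatom (stabilizer G x)) (hbot : stabilizer G x ≠ ⊥)
    (hxy : stabilizer G x ≤ stabilizer G y) : y = x := by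
  have heq : stabilizer G x = stabilizer G y :=
    Subgroup.eq_of_le_of_card_ge hxy (card_stabilizer_eq y x).le
  obtain ⟨g, rfl⟩ := exists_smul_eq G x y
  have hg : g ∈ Subgroup.normalizer (stabilizer G x : Set G) := by
    refine Subgroup.mem_normalizer_iff.mpr fun h => ?_
    nth_rw 2 [heq]
    simp [mul_smul]
  rcases (Subgroup.le_normalizer (H := stabilizer G x)).lt_or_eq with hlt | hnorm
  · have : (stabilizer G x).Normal :=
      Subgroup.normalizer_eq_top_iff.mp (hx.2 _ hlt)
    exact absurd (eq_bot_of_normal_of_le_stabilizer le_rfl) hbot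
  · exact (hnorm ▸ hg : g ∈ stabilizer G x)

theorem card_stabilizer_eq_two [Finite G] [IsPretransitive G X] [FaithfulSMul G X] {x y : X}
    (hx : IsCoatom (stabilizer G x)) (hyx : ¬stabilizer G y ≤ stabilizer G x)
    (horb : (orbit (stabilizer G x) y).ncard = 2) : Nat.card (stabilizer G x) = 2 := by
  have h2 : (stabilizer G y).relIndex (stabilizer G x) = 2 := by
    rw [← horb, ← index_stabilizer]; rfl
  have := Subgroup.normal_inf_of_isCoatom_of_relIndex_eq_two hx hyx
    (card_stabilizer_eq x y) h2
  rw [← Subgroup.card_inf_mul_relIndex, eq_bot_of_normal_of_le_stabilizer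
    (N := stabilizer G x ⊓ stabilizer G y) inf_le_left,
    Subgroup.card_bot, h2, one_mul]

theorem two_le_ncard_orbit_stabilizer [Finite X] {x y : X}
    (hxy : ¬stabilizer G x ≤ stabilizer G y) : 2 ≤ (orbit (stabilizer G x) y).ncard := by
  obtain ⟨g, hg, hgy⟩ := Set.not_subset.mp hxy
  exact (Set.one_lt_ncard).mpr ⟨_, ⟨⟨g, hg⟩, rfl⟩, y, mem_orbit_self y, hgy⟩

end MulAction

namespace SimpleGraph

open MulAction

variable {Γ}

instance : FaithfulSMul (Γ ≃g Γ) V := ⟨fun h => RelIso.ext h⟩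

instance [Finite V] : Finite (Γ ≃g Γ) :=
  Finite.of_injective _ (DFunLike.coe_injective (F := Γ ≃g Γ))

theorem smul_mem_neighborSet_iff (g : Γ ≃g Γ) {v w : V} :
    g • w ∈ Γ.neighborSet (g • v) ↔ w ∈ Γ.neighborSet v :=
  g.map_adj_iff

variable (Γ) in
def neighborSetSubMulAction (v : V) : SubMulAction (stabilizer (Γ ≃g Γ) v) V where
  carrier := Γ.neighborSet v
  smul_mem' g w hw := by
    simpa [Subgroup.smul_def, mem_stabilizer_iff.mp g.2] using
      (smul_mem_neighborSet_iff (g : Γ ≃g Γ)).mpr hw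

theorem even_card_of_forall_odd_ncard_neighborSet [Finite V]
    (h : ∀ v, Odd (Γ.neighborSet v).ncard) : Even (Nat.card V) := by
  classical
  have := Fintype.ofFinite V
  have hall : ({v | Odd (Γ.degree v)} : Finset V) = Finset.univ := by
    ext v
    simpa [← card_neighborSet_eq_degree, Set.ncard_eq_toFinset_card'] using h v
  simpa [hall, Nat.card_eq_fintype_card] using Γ.even_card_odd_degree_vertices

theorem ncard_neighborSet_lt_card [Finite V] (v : V) : (Γ.neighborSet v).ncard < Nat.card V :=
  Set.ncard_lt_card fun h => Γ.notMem_neighborSet_self (h ▸ Set.mem_univ v)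

end SimpleGraph

open MulAction SimpleGraph

variable {Γ} in
theorem VertexPrimitive.mem_orbit_stabilizer_of_adj [Finite V] {k : ℕ}
    (hval : ∀ v, (Γ.neighborSet v).ncard = k) (hodd : Odd k) (hk₁ : 1 < k) (hk₅ : k ≤ 5)
    (hprim : VertexPrimitive Γ) {v w w' : V} (hw : Γ.Adj v w) (hw' : Γ.Adj v w') :
    w' ∈ orbit (stabilizer (Γ ≃g Γ) v) w := by
  obtain ⟨htrans, hco⟩ := hprim
  have hbot (u : V) : stabilizer (Γ ≃g Γ) u ≠ ⊥ :=
    stabilizer_ne_bot_of_isCoatom (hco u)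
      (even_card_of_forall_odd_ncard_neighborSet fun u => hval u ▸ hodd)
      (by have := ncard_neighborSet_lt_card (Γ := Γ) u; rw [hval] at this; omega)
  have hnle {x y : V} (hxy : Γ.Adj x y) : ¬stabilizer (Γ ≃g Γ) x ≤ stabilizer (Γ ≃g Γ) y :=
    fun hle => hxy.ne (eq_of_stabilizer_le_s17 (hco x) (hbot x) hle).symm
  have horb_sub {u : V} (hu : Γ.Adj v u) : orbit (stabilizer (Γ ≃g Γ) v) u ⊆ Γ.neighborSet v := by
    rintro _ ⟨g, rfl⟩
    exact (Γ.neighborSetSubMulAction v).smul_mem g hu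
  by_contra hww'
  -- two disjoint orbits of size at least two inside a neighbourhood of size at most five
  obtain ⟨u, hu, horb⟩ : ∃ u, Γ.Adj v u ∧ (orbit (stabilizer (Γ ≃g Γ) v) u).ncard = 2 := by
    have hdisj := (orbit.eq_or_disjoint w w').resolve_left
      fun h => hww' (h ▸ mem_orbit_self w')
    have hsum := Set.ncard_le_ncard (Set.union_subset (horb_sub hw) (horb_sub hw'))
    rw [Set.ncard_union_eq hdisj, hval] at hsum
    have h₁ := two_le_ncard_orbit_stabilizer (hnle hw)
    have h₂ := two_le_ncard_orbit_stabilizer (hnle hw')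
    by_cases h : (orbit (stabilizer (Γ ≃g Γ) v) w).ncard = 2
    · exact ⟨w, hw, h⟩
    · exact ⟨w', hw', by omega⟩
  have hcard : Nat.card (stabilizer (Γ ≃g Γ) v) = 2 :=
    card_stabilizer_eq_two (hco v) (hnle hu.symm) horb
  obtain ⟨⟨u', hu'⟩, hfix⟩ := IsPGroup.nonempty_fixed_point_of_prime_not_dvd_card
    (IsPGroup.of_card (p := 2) (n := 1) hcard) (Γ.neighborSetSubMulAction v)
    (by rw [show Nat.card (Γ.neighborSetSubMulAction v) = (Γ.neighborSet v).ncard from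
      Nat.card_coe_set_eq _, hval]; exact hodd.not_two_dvd_nat)
  exact hnle hu' fun g hg => congrArg Subtype.val (hfix ⟨g, hg⟩)

theorem stmt_17 {V : Type*} [Finite V] (Γ : SimpleGraph V)
    (hval : ∀ v : V, (Γ.neighborSet v).ncard = 5)
    (hprim : VertexPrimitive Γ) :
    ArcTransitive Γ := by
  intro u v x y huv hxy
  have := hprim.1
  obtain ⟨g, rfl⟩ := exists_smul_eq (Γ ≃g Γ) u x
  obtain ⟨⟨h, hh⟩, rfl⟩ := hprim.mem_orbit_stabilizer_of_adj hval (by decide) (by norm_num)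
    le_rfl (g.map_adj_iff.mpr huv) hxy
  exact ⟨h * g, mem_stabilizer_iff.mp hh, rfl⟩
end
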